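/- arXiv:math/0703678 — 3 statements merged into one kernel-verified Lean document; each statement's English description precedes it below -/
import Mathlib

section
/- Let A be a noetherian ring with ideals I and J such that I = fA is principal and f is a nonzerodivisor (or just any element), and suppose n is such that for all m ≥ 0, J^(n+m) ∩ I = J^m · (J^n ∩ I). Then for the ideal J_n := I + J^n and every k > 0 one has J_n^k ∩ I = f · J_n^(k-1), i.e. any element of J_n^k divisible by f (lying in I) is f times an element of J_n^(k-1). -/
/-!
With `S = I + K`, expanding the power gives `S^(k+1) ≤ I S^k + K^(k+1)`. Intersecting with `I`
and using the modular law, `S^(k+1) ∩ I ≤ I S^k + (K^(k+1) ∩ I)`, so it suffices that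
`K^(k+1) ∩ I ≤ I K^k`. For `I = (f)` and `K = J^n` the Artin–Rees hypothesis with `m = nk` gives
`J^(n(k+1)) ∩ I = J^(nk) (J^n ∩ I) ⊆ I J^(nk)`.
-/

namespace Ideal

theorem sup_pow_succ_le {R : Type*} [CommSemiring R] (I K : Ideal R) (k : ℕ) :
    (I ⊔ K) ^ (k + 1) ≤ I * (I ⊔ K) ^ k ⊔ K ^ (k + 1) := by
  induction k with
  | zero => simp
  | succ k ih =>
    calc (I ⊔ K) ^ (k + 2) = (I ⊔ K) * (I ⊔ K) ^ (k + 1) := pow_succ' _ _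
      _ ≤ (I ⊔ K) * (I * (I ⊔ K) ^ k ⊔ K ^ (k + 1)) := mul_mono_right ih
      _ = (I ⊔ K) * (I * (I ⊔ K) ^ k) ⊔ (I * K ^ (k + 1) ⊔ K * K ^ (k + 1)) := by
        rw [mul_sup, sup_mul I K (K ^ (k + 1))]
      _ ≤ I * (I ⊔ K) ^ (k + 1) ⊔ K ^ (k + 2) := by
        rw [mul_left_comm, ← pow_succ', ← pow_succ' K]
        refine sup_le le_sup_left (sup_le_sup_right ?_ _)
        exact mul_mono_right (pow_right_mono le_sup_right _)

theorem sup_pow_succ_inf_left {R : Type*} [CommRing R] {I K : Ideal R} {k : ℕ}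
    (hK : K ^ (k + 1) ⊓ I ≤ I * K ^ k) :
    (I ⊔ K) ^ (k + 1) ⊓ I = I * (I ⊔ K) ^ k := by
  refine le_antisymm ?_ (le_inf ?_ mul_le_left)
  · calc (I ⊔ K) ^ (k + 1) ⊓ I ≤ (I * (I ⊔ K) ^ k ⊔ K ^ (k + 1)) ⊓ I :=
          inf_le_inf_right _ (sup_pow_succ_le I K k)
      _ = I * (I ⊔ K) ^ k ⊔ K ^ (k + 1) ⊓ I := sup_inf_assoc_of_le _ mul_le_left
      _ ≤ I * (I ⊔ K) ^ k :=
          sup_le le_rfl (hK.trans (mul_mono_right (pow_right_mono le_sup_right _)))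
  · rw [pow_succ']
    exact mul_mono_left le_sup_left

end Ideal

theorem stmt0_general {A : Type*} [CommRing A] (f : A) (J : Ideal A) (n : ℕ)
    (h : ∀ m : ℕ, J ^ (n + m) ⊓ Ideal.span {f} = J ^ m * (J ^ n ⊓ Ideal.span {f})) :
    ∀ k : ℕ, 0 < k →
      (Ideal.span {f} + J ^ n) ^ k ⊓ Ideal.span {f} =
        Ideal.span {f} * (Ideal.span {f} + J ^ n) ^ (k - 1) := by
  rintro (_ | k) hk
  · exact absurd hk (lt_irrefl 0)
  rw [Ideal.add_eq_sup, Nat.add_sub_cancel]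
  refine Ideal.sup_pow_succ_inf_left ?_
  calc (J ^ n) ^ (k + 1) ⊓ Ideal.span {f} = J ^ (n * k) * (J ^ n ⊓ Ideal.span {f}) := by
        rw [← pow_mul, mul_add_one, add_comm, h]
    _ ≤ Ideal.span {f} * (J ^ n) ^ k := by
        rw [mul_comm, pow_mul]
        exact Ideal.mul_mono_left inf_le_right

/-- If `J^(n+m) ∩ (f) = J^m (J^n ∩ (f))` for all `m ≥ 0`, then for
`Jₙ := (f) + J^n` and every `k > 0` one has `Jₙ^k ∩ (f) = f · Jₙ^(k-1)`. -/
theorem stmt0 {A : Type*} [CommRing A] [IsNoetherianRing A] (f : A) (J : Ideal A) (n : ℕ)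
    (h : ∀ m : ℕ, J ^ (n + m) ⊓ Ideal.span {f} = J ^ m * (J ^ n ⊓ Ideal.span {f})) :
    ∀ k : ℕ, 0 < k →
      (Ideal.span {f} + J ^ n) ^ k ⊓ Ideal.span {f} =
        Ideal.span {f} * (Ideal.span {f} + J ^ n) ^ (k - 1) :=
  stmt0_general f J n h
end

section
/- Let A be a noetherian ring, I = (f_1, …, f_n) an ideal, and g ∈ I. Then the subring A[I/g] of the localization A_g generated by the elements f_i/g is isomorphic to the quotient of A' = A[T_1, …, T_n]/(gT_1 − f_1, …, gT_n − f_n) by its g-torsion submodule. -/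
/-- The `g`-torsion ideal of a commutative ring. -/
def gTorsion {A' : Type*} [CommRing A'] (g : A') : Ideal A' where
  carrier := {x | ∃ k : ℕ, g ^ k * x = 0}
  zero_mem' := ⟨0, by simp⟩
  add_mem' := by
    rintro a b ⟨k, hk⟩ ⟨l, hl⟩
    refine ⟨k + l, ?_⟩
    have h1 : g ^ (k + l) * (a + b) = g ^ l * (g ^ k * a) + g ^ k * (g ^ l * b) := by ring
    rw [h1, hk, hl, mul_zero, mul_zero, add_zero]
  smul_mem' := by
    rintro c x ⟨k, hk⟩
    refine ⟨k, ?_⟩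
    have h1 : g ^ k * (c • x) = c * (g ^ k * x) := by
      rw [smul_eq_mul]; ring
    rw [h1, hk, mul_zero]

/-!
Evaluating `Tᵢ ↦ fᵢ/g` maps `A' = A[T]/(gTᵢ - fᵢ)` onto `A[I/g]`, and the `g`-torsion lies in the
kernel because `g` becomes a unit. Conversely, multiplying by a power of `g` turns every polynomial
into a constant modulo the relations; a constant vanishing in `A_g` is killed by a power of `g`,
so the kernel is exactly the `g`-torsion.
-/

open MvPolynomial

namespace BlowupChart

variable {A ι : Type*} [CommRing A] (f : ι → A) (g : A)

noncomputable def relations : Ideal (MvPolynomial ι A) :=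
  Ideal.span (Set.range fun i => C g * X i - C (f i))

noncomputable def fractions (B : Type*) [CommRing B] [Algebra A B] [IsLocalization.Away g B] :
    ι → B :=
  fun i => algebraMap A B (f i) * IsLocalization.Away.invSelf g

theorem exists_C_pow_mul_sub_C_mem_relations (p : MvPolynomial ι A) :
    ∃ (d : ℕ) (a : A), C g ^ d * p - C a ∈ relations f g := by
  induction p using MvPolynomial.induction_on with
  | C c => exact ⟨0, c, by simp⟩
  | add p q hp hq =>
    obtain ⟨d, a, hpa⟩ := hp
    obtain ⟨e, b, hqb⟩ := hq
    refine ⟨d + e, g ^ e * a + g ^ d * b, ?_⟩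
    have h : C g ^ (d + e) * (p + q) - C (g ^ e * a + g ^ d * b) =
        C g ^ e * (C g ^ d * p - C a) + C g ^ d * (C g ^ e * q - C b) := by
      simp only [map_add, map_mul, map_pow]
      ring
    rw [h]
    exact add_mem (Ideal.mul_mem_left _ _ hpa) (Ideal.mul_mem_left _ _ hqb)
  | mul_X p i hp =>
    obtain ⟨d, a, hpa⟩ := hp
    refine ⟨d + 1, a * f i, ?_⟩
    have h : C g ^ (d + 1) * (p * X i) - C (a * f i) =
        (C g ^ d * p - C a) * (C g * X i) + C a * (C g * X i - C (f i)) := by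
      simp only [map_mul]
      ring
    rw [h]
    exact add_mem (Ideal.mul_mem_right _ _ hpa) (Ideal.mul_mem_left _ _ (Ideal.subset_span ⟨i, rfl⟩))

variable (B : Type*) [CommRing B] [Algebra A B] [IsLocalization.Away g B]

theorem relations_le_ker_aeval :
    relations f g ≤ RingHom.ker (aeval (fractions f g B)) := by
  rw [relations, Ideal.span_le]
  rintro _ ⟨i, rfl⟩
  have hg := IsLocalization.Away.mul_invSelf (S := B) g
  simp only [SetLike.mem_coe, RingHom.mem_ker, map_sub, map_mul, aeval_C, aeval_X, fractions]
  linear_combination algebraMap A B (f i) * hg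

theorem aeval_fractions_eq_zero_iff (p : MvPolynomial ι A) :
    aeval (fractions f g B) p = 0 ↔ ∃ k : ℕ, C g ^ k * p ∈ relations f g := by
  have hker := relations_le_ker_aeval f g B
  constructor
  · intro hp
    obtain ⟨d, a, hpa⟩ := exists_C_pow_mul_sub_C_mem_relations f g p
    have ha : algebraMap A B a = 0 := by
      simpa [hp] using hker hpa
    obtain ⟨⟨_, m, rfl⟩, hma⟩ := (IsLocalization.map_eq_zero_iff (Submonoid.powers g) B a).mp ha
    refine ⟨m + d, ?_⟩
    have h : C g ^ (m + d) * p = C (g ^ m) * (C g ^ d * p - C a) + C (g ^ m * a) := by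
      simp only [map_mul, map_pow]
      ring
    rw [h, hma, map_zero, add_zero]
    exact Ideal.mul_mem_left _ _ hpa
  · rintro ⟨k, hk⟩
    have h := hker hk
    rw [RingHom.mem_ker, map_mul, map_pow, aeval_C] at h
    exact ((IsLocalization.Away.algebraMap_isUnit g).pow k).mul_right_eq_zero.mp h

noncomputable abbrev torsionFreeQuotientMap :
    MvPolynomial ι A →ₐ[A] (MvPolynomial ι A ⧸ relations f g) ⧸
      gTorsion (Ideal.Quotient.mk (relations f g) (C g)) :=
  (Ideal.Quotient.mkₐ A _).comp (Ideal.Quotient.mkₐ A _)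

theorem ker_torsionFreeQuotientMap :
    RingHom.ker (torsionFreeQuotientMap f g) = RingHom.ker (aeval (fractions f g B)) := by
  ext p
  rw [RingHom.mem_ker, RingHom.mem_ker, aeval_fractions_eq_zero_iff]
  change Ideal.Quotient.mk _ (Ideal.Quotient.mk _ p) = 0 ↔ _
  rw [Ideal.Quotient.eq_zero_iff_mem]
  refine exists_congr fun k => ?_
  rw [← map_pow, ← map_mul, Ideal.Quotient.eq_zero_iff_mem]

theorem torsionFreeQuotientMap_surjective : Function.Surjective (torsionFreeQuotientMap f g) :=
  (Ideal.Quotient.mkₐ_surjective A _).comp (Ideal.Quotient.mkₐ_surjective A _)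

noncomputable def equivAdjoin :
    ((MvPolynomial ι A ⧸ relations f g) ⧸ gTorsion (Ideal.Quotient.mk (relations f g) (C g)))
      ≃ₐ[A] Algebra.adjoin A (Set.range (fractions f g B)) :=
  (Ideal.quotientKerAlgEquivOfSurjective (torsionFreeQuotientMap_surjective f g)).symm.trans <|
    (Ideal.quotientEquivAlgOfEq A (ker_torsionFreeQuotientMap f g B)).trans <|
      (Ideal.quotientKerEquivRange _).trans <|
        Subalgebra.equivOfEq _ _ (Algebra.adjoin_range_eq_range_aeval A _).symm

end BlowupChart

theorem stmt3_general {A : Type*} [CommRing A]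
    (n : ℕ) (f : Fin n → A) (g : A) :
    Nonempty
      (((MvPolynomial (Fin n) A ⧸
          Ideal.span (Set.range fun i =>
            MvPolynomial.C g * MvPolynomial.X i - MvPolynomial.C (f i))) ⧸
        gTorsion ((Ideal.Quotient.mk (Ideal.span (Set.range fun i =>
            MvPolynomial.C g * MvPolynomial.X i - MvPolynomial.C (f i))))
          (MvPolynomial.C g)))
      ≃ₐ[A]
      Algebra.adjoin A (Set.range fun i =>
        algebraMap A (Localization.Away g) (f i) * IsLocalization.Away.invSelf g)) :=
  ⟨BlowupChart.equivAdjoin f g (Localization.Away g)⟩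

/-- the chart `A[I/g]` of the blow-up of `Spec A` along `I = (f₁,…,fₙ)`,
i.e. the subring of `A_g` generated by the `fᵢ/g`, is isomorphic to
`A[T₁,…,Tₙ]/(gT₁ − f₁, …, gTₙ − fₙ)` modulo its `g`-torsion. -/
theorem stmt3 {A : Type*} [CommRing A] [IsNoetherianRing A]
    (n : ℕ) (f : Fin n → A) (g : A) (hg : g ∈ Ideal.span (Set.range f)) :
    Nonempty
      (((MvPolynomial (Fin n) A ⧸
          Ideal.span (Set.range fun i =>
            MvPolynomial.C g * MvPolynomial.X i - MvPolynomial.C (f i))) ⧸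
        gTorsion ((Ideal.Quotient.mk (Ideal.span (Set.range fun i =>
            MvPolynomial.C g * MvPolynomial.X i - MvPolynomial.C (f i))))
          (MvPolynomial.C g)))
      ≃ₐ[A]
      Algebra.adjoin A (Set.range fun i =>
        algebraMap A (Localization.Away g) (f i) * IsLocalization.Away.invSelf g)) :=
  stmt3_general n f g
end

section
/- Let A be a noetherian ring, I ⊆ A an ideal, and P ⊆ A another ideal. Then the P-adic completion of the polynomial quotient A[T_1,…,T_n]/(gT_1 − f_1, …, gT_n − f_n) is isomorphic to Â{T_1,…,T_n}/(gT_1 − f_1, …, gT_n − f_n), where Â is the P-adic completion of A and Â{T} denotes the restricted power series ring (P-adic completion of Â[T]). -/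
/-!
Completing along `P` is computed levelwise, as the inverse limit of the rings `R ⧸ P ^ n`.
For a polynomial ring these are `(A ⧸ P ^ n)[T]`, and `A ⧸ P ^ n ≅ Â ⧸ (P Â) ^ n` since `P` is
finitely generated, so `A[T]` and `Â[T]` have the same `P`-adic completion `Â{T}`. Over a
noetherian ring completion is exact on finite modules and `Â ⊗ J` maps onto `Ĵ`, so completing
`A[T] ⧸ J` gives `Â{T} ⧸ J Â{T}`.
-/

theorem Ideal.pow_le_comap_pow_of_map_le {R S : Type*} [CommRing R] [CommRing S] {I : Ideal R}
    {K : Ideal S} {φ : R →+* S} (h : I.map φ ≤ K) (n : ℕ) : I ^ n ≤ (K ^ n).comap φ :=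
  (Ideal.pow_right_mono (Ideal.map_le_iff_le_comap.mp h) n).trans (Ideal.le_comap_pow φ n)

theorem Ideal.quotientMap_factorPow {R S : Type*} [CommRing R] [CommRing S] {I : Ideal R}
    {K : Ideal S} {φ : R →+* S} (h : I.map φ ≤ K) {m n : ℕ} (hmn : m ≤ n) (w : R ⧸ I ^ n) :
    quotientMap (K ^ m) φ (pow_le_comap_pow_of_map_le h m) (Quotient.factorPow I hmn w) =
      Quotient.factorPow K hmn (quotientMap (K ^ n) φ (pow_le_comap_pow_of_map_le h n) w) := by
  obtain ⟨r, rfl⟩ := Quotient.mk_surjective w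
  simp

namespace MvPolynomial

variable {R S : Type*} [CommRing R] [CommRing S] {σ : Type*}

/-- The ideals are given up to equality so that the lemma applies to `(I.map C) ^ n`, which is
not syntactically `(I ^ n).map C`. -/
theorem quotientMap_map_bijective {I : Ideal R} {K : Ideal S} {φ : R →+* S}
    (h : I ≤ K.comap φ) (hφ : Function.Bijective (Ideal.quotientMap K φ h))
    {I' : Ideal (MvPolynomial σ R)} {K' : Ideal (MvPolynomial σ S)} (hI' : I' = I.map C)
    (hK' : K' = K.map C) (h' : I' ≤ K'.comap (map φ)) :
    Function.Bijective (Ideal.quotientMap K' (map φ) h') := by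
  subst hI' hK'
  have mem_of_map_mem {r : R} (hr : φ r ∈ K) : r ∈ I := by
    rw [← Ideal.Quotient.eq_zero_iff_mem] at hr ⊢
    exact hφ.1 (by rwa [Ideal.quotientMap_mk, map_zero])
  refine ⟨Ideal.quotientMap_injective' fun p hp ↦ ?_, fun y ↦ ?_⟩
  · rw [Ideal.mem_comap, mem_map_C_iff] at hp
    exact mem_map_C_iff.mpr fun m ↦ mem_of_map_mem (by simpa only [coeff_map] using hp m)
  · obtain ⟨q, rfl⟩ := Ideal.Quotient.mk_surjective y
    induction q using MvPolynomial.induction_on with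
    | C s =>
      obtain ⟨r, hr⟩ := hφ.2 (Ideal.Quotient.mk K s)
      obtain ⟨r, rfl⟩ := Ideal.Quotient.mk_surjective r
      refine ⟨Ideal.Quotient.mk _ (C r), ?_⟩
      rw [Ideal.quotientMap_mk, Ideal.Quotient.mk_eq_mk_iff_sub_mem] at hr ⊢
      simpa using Ideal.mem_map_of_mem C hr
    | add p q hp hq =>
      obtain ⟨a, ha⟩ := hp
      obtain ⟨b, hb⟩ := hq
      exact ⟨a + b, by rw [map_add, ha, hb, map_add]⟩
    | mul_X p i hp =>
      obtain ⟨a, ha⟩ := hp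
      exact ⟨a * Ideal.Quotient.mk _ (X i), by simp [ha]⟩

end MvPolynomial

namespace AdicCompletion

variable {R S : Type*} [CommRing R] [CommRing S]

section MapRingHom

variable (I : Ideal R)

theorem factorPow_evalₐ {m n : ℕ} (hmn : m ≤ n) (x : AdicCompletion I R) :
    Ideal.Quotient.factorPow I hmn (evalₐ I n x) = evalₐ I m x := by
  induction x using induction_on with
  | h a => simp [Ideal.mk_eq_mk I hmn]

variable (K : Ideal S) (φ : R →+* S) (h : I.map φ ≤ K)

theorem factorPow_comp_quotientMap_comp_evalₐ {m n : ℕ} (hmn : m ≤ n) :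
    (Ideal.Quotient.factorPow K hmn).comp ((Ideal.quotientMap (K ^ n) φ
        (Ideal.pow_le_comap_pow_of_map_le h n)).comp (evalₐ I n).toRingHom) =
      (Ideal.quotientMap (K ^ m) φ (Ideal.pow_le_comap_pow_of_map_le h m)).comp
        (evalₐ I m).toRingHom := by
  ext x
  simp only [RingHom.coe_comp, Function.comp_apply, AlgHom.toRingHom_eq_coe, RingHom.coe_coe]
  rw [← factorPow_evalₐ I hmn x, Ideal.quotientMap_factorPow h]

noncomputable def mapRingHom : AdicCompletion I R →+* AdicCompletion K S :=
  liftRingHom K _ (factorPow_comp_quotientMap_comp_evalₐ I K φ h)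

@[simp]
theorem evalₐ_mapRingHom (n : ℕ) (x : AdicCompletion I R) :
    evalₐ K n (mapRingHom I K φ h x) =
      Ideal.quotientMap (K ^ n) φ (Ideal.pow_le_comap_pow_of_map_le h n) (evalₐ I n x) :=
  evalₐ_liftRingHom _ _ (factorPow_comp_quotientMap_comp_evalₐ I K φ h) n x

theorem mapRingHom_algebraMap (r : R) :
    mapRingHom I K φ h (algebraMap R _ r) = algebraMap S _ (φ r) :=
  ext_evalₐ fun n ↦ by simp

theorem mapRingHom_bijective (hφ : ∀ n, Function.Bijective
      (Ideal.quotientMap (K ^ n) φ (Ideal.pow_le_comap_pow_of_map_le h n))) :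
    Function.Bijective (mapRingHom I K φ h) := by
  let e n := RingEquiv.ofBijective _ (hφ n)
  have compat {m n : ℕ} (hmn : m ≤ n) : (Ideal.Quotient.factorPow I hmn).comp
      ((e n).symm.toRingHom.comp (evalₐ K n).toRingHom) =
        (e m).symm.toRingHom.comp (evalₐ K m).toRingHom := by
    ext y
    apply (e m).injective
    obtain ⟨w, hw⟩ := (e n).surjective (evalₐ K n y)
    simp only [RingHom.coe_comp, Function.comp_apply, AlgHom.toRingHom_eq_coe, RingHom.coe_coe,
      ← factorPow_evalₐ K hmn y, ← hw, RingEquiv.toRingHom_eq_coe,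
      RingEquiv.apply_symm_apply, RingEquiv.symm_apply_apply]
    exact Ideal.quotientMap_factorPow h hmn w
  refine ⟨fun x y hxy ↦ ext_evalₐ fun n ↦ (hφ n).1 ?_, fun y ↦ ⟨liftRingHom I _ compat y, ?_⟩⟩
  · simpa using congrArg (evalₐ K n) hxy
  · refine ext_evalₐ fun n ↦ ?_
    rw [evalₐ_mapRingHom, evalₐ_liftRingHom I _ compat n y]
    exact (e n).apply_symm_apply (evalₐ K n y)

end MapRingHom

section FG

variable {I : Ideal R}

theorem evalₐ_eq_zero_iff {n : ℕ} {x : AdicCompletion I R} :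
    evalₐ I n x = 0 ↔ eval I R n x = 0 :=
  EmbeddingLike.map_eq_zero_iff
    (f := Ideal.quotientEquivAlgOfEq R (by simp : (I ^ n • ⊤ : Ideal R) = I ^ n))

theorem ker_evalₐ (hI : I.FG) (n : ℕ) :
    RingHom.ker (evalₐ I n) = I.map (algebraMap R (AdicCompletion I R)) ^ n := by
  ext x
  have hker := pow_smul_top_eq_ker_eval (M := R) (n := n) hI
  rw [Ideal.smul_top_eq_map] at hker
  rw [← Ideal.map_pow, RingHom.mem_ker, evalₐ_eq_zero_iff, ← LinearMap.mem_ker, ← hker]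
  rfl

theorem quotientMap_algebraMap_bijective (hI : I.FG) (n : ℕ) :
    Function.Bijective (Ideal.quotientMap (I.map (algebraMap R (AdicCompletion I R)) ^ n)
      (algebraMap R (AdicCompletion I R)) (Ideal.pow_le_comap_pow_of_map_le le_rfl n)) := by
  refine ⟨Ideal.quotientMap_injective' fun r hr ↦ ?_, fun y ↦ ?_⟩
  · rw [Ideal.mem_comap, ← ker_evalₐ hI, RingHom.mem_ker, AlgHom.commutes] at hr
    exact Ideal.Quotient.eq_zero_iff_mem.mp hr
  · obtain ⟨b, rfl⟩ := Ideal.Quotient.mk_surjective y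
    obtain ⟨r, hr⟩ := Ideal.Quotient.mk_surjective (evalₐ I n b)
    refine ⟨Ideal.Quotient.mk _ r, ?_⟩
    rw [Ideal.quotientMap_mk, Ideal.Quotient.eq, ← ker_evalₐ hI, RingHom.mem_ker, map_sub,
      AlgHom.commutes, ← hr, Ideal.Quotient.algebraMap_eq, sub_self]

/-- Both completions are adically complete, so surjectivity only has to be checked modulo
`I`, where it is the surjectivity of `R → S ⧸ I S`. -/
theorem mapRingHom_surjective (hI : I.FG) {φ : R →+* S} (hφ : Function.Surjective φ) :
    Function.Surjective (mapRingHom I (I.map φ) φ le_rfl) := by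
  set f := mapRingHom I (I.map φ) φ le_rfl
  have hmap : (I.map (algebraMap R (AdicCompletion I R))).map f =
      (I.map φ).map (algebraMap S (AdicCompletion (I.map φ) S)) := by
    rw [Ideal.map_map, Ideal.map_map,
      show f.comp (algebraMap R _) = (algebraMap S _).comp φ from
        RingHom.ext (mapRingHom_algebraMap I _ φ le_rfl)]
  have : IsAdicComplete (I.map (algebraMap R (AdicCompletion I R))) (AdicCompletion I R) :=
    (IsAdicComplete.map_algebraMap_iff _ _).mpr (isAdicComplete hI)
  have : IsHausdorff ((I.map (algebraMap R (AdicCompletion I R))).map f)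
      (AdicCompletion (I.map φ) S) := by
    rw [hmap, IsHausdorff.map_algebraMap_iff]
    exact (isAdicComplete (hI.map φ)).toIsHausdorff
  refine surjective_of_mk_map_comp_surjective (I := I.map (algebraMap R _)) f fun y ↦ ?_
  obtain ⟨y, rfl⟩ := Ideal.Quotient.mk_surjective y
  obtain ⟨s, hs⟩ := Ideal.Quotient.mk_surjective (evalOneₐ _ y)
  obtain ⟨r, rfl⟩ := hφ s
  refine ⟨algebraMap R _ r, ?_⟩
  rw [RingHom.comp_apply, Ideal.Quotient.eq, hmap, ← ker_evalOneₐ_eq_map _ (hI.map φ),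
    RingHom.mem_ker, map_sub, mapRingHom_algebraMap]
  exact sub_eq_zero.mpr hs

end FG

section Quotient

variable (I J : Ideal R)

theorem map_mkQ_eq_zero_of_mapRingHom_eq_zero {x : AdicCompletion I R}
    (hx : mapRingHom I (I.map (Ideal.Quotient.mk J)) (Ideal.Quotient.mk J) le_rfl x = 0) :
    map I J.mkQ x = 0 := by
  induction x using induction_on with | h a => ?_
  ext n
  have hn := congrArg (evalₐ _ n) hx
  rw [evalₐ_mapRingHom, evalₐ_mk, Ideal.quotientMap_mk, _root_.map_zero,
    Ideal.Quotient.eq_zero_iff_mem, ← Ideal.map_pow, Ideal.mem_quotient_iff_mem_sup] at hn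
  simpa [sup_comm] using hn

variable [IsNoetherianRing R]

/-- By exactness of completion, `x` comes from the completion of `J`, which is the image of
`AdicCompletion I R ⊗[R] J`. -/
theorem mem_map_algebraMap_of_map_mkQ_eq_zero {x : AdicCompletion I R}
    (hx : map I J.mkQ x = 0) : x ∈ J.map (algebraMap R (AdicCompletion I R)) := by
  obtain ⟨y, rfl⟩ := (map_exact (Submodule.injective_subtype J) (LinearMap.exact_subtype_mkQ J)
    (Submodule.mkQ_surjective J) x).mp hx
  obtain ⟨t, rfl⟩ := ofTensorProduct_surjective_of_finite I J y
  rw [← LinearMap.comp_apply, ofTensorProduct_naturality]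
  clear hx
  induction t using TensorProduct.induction_on with
  | zero => simp
  | tmul r j => exact Ideal.mul_mem_left _ r (Ideal.mem_map_of_mem _ j.2)
  | add t u ht hu => simpa using add_mem ht hu

theorem ker_mapRingHom_mk :
    RingHom.ker (mapRingHom I (I.map (Ideal.Quotient.mk J)) (Ideal.Quotient.mk J) le_rfl) =
      J.map (algebraMap R (AdicCompletion I R)) := by
  refine le_antisymm (fun x hx ↦ mem_map_algebraMap_of_map_mkQ_eq_zero I J
    (map_mkQ_eq_zero_of_mapRingHom_eq_zero I J hx)) (Ideal.map_le_iff_le_comap.mpr fun j hj ↦ ?_)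
  rw [Ideal.mem_comap, RingHom.mem_ker, mapRingHom_algebraMap,
    Ideal.Quotient.eq_zero_iff_mem.mpr hj, _root_.map_zero]

noncomputable def quotientRingEquiv :
    AdicCompletion (I.map (Ideal.Quotient.mk J)) (R ⧸ J) ≃+*
      AdicCompletion I R ⧸ J.map (algebraMap R (AdicCompletion I R)) :=
  ((Ideal.quotEquivOfEq (ker_mapRingHom_mk I J).symm).trans
    (RingHom.quotientKerEquivOfSurjective
      (mapRingHom_surjective (Ideal.fg_of_isNoetherianRing I) Ideal.Quotient.mk_surjective))).symm

end Quotient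

section MvPolynomial

open MvPolynomial

variable {I : Ideal R} (σ : Type*)

theorem map_C_map_le_map_C :
    (I.map (C : R →+* MvPolynomial σ R)).map
        (MvPolynomial.map (algebraMap R (AdicCompletion I R))) ≤
      (I.map (algebraMap R (AdicCompletion I R))).map C := by
  rw [Ideal.map_map, MvPolynomial.map_comp_C, ← Ideal.map_map]

noncomputable def mvPolynomialRingEquiv (hI : I.FG) :
    AdicCompletion (I.map (C : R →+* MvPolynomial σ R)) (MvPolynomial σ R) ≃+*
      AdicCompletion ((I.map (algebraMap R (AdicCompletion I R))).map
          (C : AdicCompletion I R →+* MvPolynomial σ (AdicCompletion I R)))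
        (MvPolynomial σ (AdicCompletion I R)) :=
  RingEquiv.ofBijective (mapRingHom _ _ _ (map_C_map_le_map_C σ)) <|
    mapRingHom_bijective _ _ _ _ fun n ↦
      MvPolynomial.quotientMap_map_bijective _ (quotientMap_algebraMap_bijective hI n)
        (Ideal.map_pow ..).symm (Ideal.map_pow ..).symm _

theorem mvPolynomialRingEquiv_algebraMap (hI : I.FG) (p : MvPolynomial σ R) :
    mvPolynomialRingEquiv σ hI (algebraMap _ _ p) =
      algebraMap _ _ (MvPolynomial.map (algebraMap R (AdicCompletion I R)) p) :=
  mapRingHom_algebraMap _ _ _ (map_C_map_le_map_C σ) p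

end MvPolynomial

end AdicCompletion

open MvPolynomial in
/-- the `P`-adic completion of `A[T₁,…,Tₙ]/(gT₁ − f₁, …, gTₙ − fₙ)` is
isomorphic to `Â{T₁,…,Tₙ}/(gT₁ − f₁, …, gTₙ − fₙ)`, where `Â` is the `P`-adic completion
of `A` and `Â{T}` is the `P`-adic completion of `Â[T]` (restricted power series). -/
theorem stmt8 {A : Type} [CommRing A] [IsNoetherianRing A] (P : Ideal A)
    (n : ℕ) (f : Fin n → A) (g : A) :
    Nonempty
      (AdicCompletion
          (P.map (algebraMap A
            (MvPolynomial (Fin n) A ⧸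
              Ideal.span (Set.range fun i => C g * X i - C (f i)))))
          (MvPolynomial (Fin n) A ⧸
            Ideal.span (Set.range fun i => C g * X i - C (f i)))
        ≃+*
        (AdicCompletion
            ((P.map (algebraMap A (AdicCompletion P A))).map
              (C : AdicCompletion P A →+* MvPolynomial (Fin n) (AdicCompletion P A)))
            (MvPolynomial (Fin n) (AdicCompletion P A)) ⧸
          Ideal.span (Set.range fun i =>
            algebraMap (MvPolynomial (Fin n) (AdicCompletion P A))
              (AdicCompletion
                ((P.map (algebraMap A (AdicCompletion P A))).map
                  (C : AdicCompletion P A →+* MvPolynomial (Fin n) (AdicCompletion P A)))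
                (MvPolynomial (Fin n) (AdicCompletion P A)))
              (C (algebraMap A (AdicCompletion P A) g) * X i -
                C (algebraMap A (AdicCompletion P A) (f i)))))) := by
  set J := Ideal.span (Set.range fun i => C g * X i - C (f i))
  set Ψ := AdicCompletion.mvPolynomialRingEquiv (Fin n) (Ideal.fg_of_isNoetherianRing P)
  have hP : P.map (algebraMap A (MvPolynomial (Fin n) A ⧸ J)) =
      (P.map C).map (Ideal.Quotient.mk J) := by
    rw [Ideal.map_map]
    rfl
  have hJ : Ideal.span (Set.range fun i => algebraMap _ (AdicCompletion ((P.map (algebraMap A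
        (AdicCompletion P A))).map C) (MvPolynomial (Fin n) (AdicCompletion P A)))
          (C (algebraMap A (AdicCompletion P A) g) * X i -
            C (algebraMap A (AdicCompletion P A) (f i)))) =
      (J.map (algebraMap _ (AdicCompletion (P.map C) _))).map Ψ := by
    simp only [J, Ideal.map_span, ← Set.range_comp]
    congr 2
    ext i
    simp [Ψ, AdicCompletion.mvPolynomialRingEquiv_algebraMap]
  rw [hP, hJ]
  exact ⟨(AdicCompletion.quotientRingEquiv _ J).trans (Ideal.quotientEquiv _ _ Ψ rfl)⟩
end
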